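/- arXiv:1106.2799 — 4 statements merged into one kernel-verified Lean document; each statement's English description precedes it below -/
import Mathlib

section
/- The decomposition R² = (4z/(z+1)²) ∘ z² of R(z) = (z−1)²/(z+1)² is not equivalent to the decomposition R ∘ R: there is no Möbius transformation γ with 4z/(z+1)² = R ∘ γ and z² = γ⁻¹ ∘ R. -/
open Polynomial GCDMonoid


/-- Composition of rational functions over `ℂ`: substitute `g` for the variable of `f`. -/
noncomputable def ratComp (f g : RatFunc ℂ) : RatFunc ℂ :=
  RatFunc.eval RatFunc.C g f

/-- A rational function is a Möbius transformation if it has a compositional inverse. -/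
def IsMobius (γ : RatFunc ℂ) : Prop :=
  ∃ δ : RatFunc ℂ, ratComp γ δ = RatFunc.X ∧ ratComp δ γ = RatFunc.X

lemma RC_ne_zero {k : ℂ} (hk : k ≠ 0) : RatFunc.C k ≠ 0 := by
  rw [← RatFunc.algebraMap_C]
  exact RatFunc.algebraMap_ne_zero (Polynomial.C_ne_zero.2 hk)

/-- X is not a square in RatFunc ℂ -/
lemma no_sqrt_X (v : RatFunc ℂ) : v ^ 2 ≠ RatFunc.X := by
  intro h
  have hv : v ≠ 0 := by
    rintro rfl
    simp at h
    exact RatFunc.X_ne_zero h.symm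
  have hd := RatFunc.denom_ne_zero v
  have hn : v.num ≠ 0 := RatFunc.num_ne_zero hv
  have e2 : (algebraMap ℂ[X] (RatFunc ℂ)) v.num = v * (algebraMap ℂ[X] (RatFunc ℂ)) v.denom :=
    (div_eq_iff (RatFunc.algebraMap_ne_zero hd)).mp (RatFunc.num_div_denom v)
  have h3 : v.num ^ 2 = Polynomial.X * v.denom ^ 2 := by
    apply RatFunc.algebraMap_injective ℂ
    rw [map_pow, map_mul, map_pow, e2, RatFunc.algebraMap_X, ← h]
    ring
  have := congrArg Polynomial.natDegree h3
  rw [Polynomial.natDegree_pow, Polynomial.natDegree_mul Polynomial.X_ne_zero (pow_ne_zero _ hd),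
    Polynomial.natDegree_pow, Polynomial.natDegree_X] at this
  omega

lemma eval_div_coprime (p q : ℂ[X]) (hq : q ≠ 0) (h : IsCoprime p q) (a : RatFunc ℂ) :
    RatFunc.eval RatFunc.C a (algebraMap ℂ[X] (RatFunc ℂ) p / algebraMap ℂ[X] (RatFunc ℂ) q) =
      p.eval₂ RatFunc.C a / q.eval₂ RatFunc.C a := by
  classical
  rw [RatFunc.eval, RatFunc.num_div, RatFunc.denom_div p hq]
  set g := gcd p q with hg
  have hgu : IsUnit g := (gcd_isUnit_iff p q).2 h
  obtain ⟨c, hcu, hc⟩ := Polynomial.isUnit_iff.mp hgu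
  have hg0 : g ≠ 0 := hgu.ne_zero
  have hpg : p = g * (p / g) := (EuclideanDomain.mul_div_cancel' hg0 (gcd_dvd_left p q)).symm
  have hqg : q = g * (q / g) := (EuclideanDomain.mul_div_cancel' hg0 (gcd_dvd_right p q)).symm
  have hqg0 : q / g ≠ 0 := by
    intro h0; rw [h0, mul_zero] at hqg; exact hq hqg
  have hk : (q / g).leadingCoeff⁻¹ ≠ 0 := by
    simp [Polynomial.leadingCoeff_ne_zero, hqg0]
  have hCk : (Polynomial.C (q / g).leadingCoeff⁻¹).eval₂ RatFunc.C a ≠ 0 := by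
    rw [Polynomial.eval₂_C]
    exact RC_ne_zero hk
  have hge : g.eval₂ RatFunc.C a ≠ 0 := by
    rw [← hc, Polynomial.eval₂_C]
    exact RC_ne_zero hcu.ne_zero
  rw [Polynomial.eval₂_mul, Polynomial.eval₂_mul, mul_div_mul_left _ _ hCk]
  conv_rhs => rw [hpg, hqg, Polynomial.eval₂_mul, Polynomial.eval₂_mul,
    mul_div_mul_left _ _ hge]

/-- The decomposition `R² = (4z/(z+1)²) ∘ z²` of `R(z) = (z-1)²/(z+1)²` is not
equivalent to `R ∘ R`: there is no Möbius transformation `γ` (with compositional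
inverse `δ = γ⁻¹`) such that `4z/(z+1)² = R ∘ γ` and `z² = γ⁻¹ ∘ R`. -/
theorem zieve_decompositions_not_equivalent :
    ¬ ∃ γ δ : RatFunc ℂ,
        ratComp γ δ = RatFunc.X ∧ ratComp δ γ = RatFunc.X ∧
        4 * RatFunc.X / (RatFunc.X + 1) ^ 2 =
          ratComp ((RatFunc.X - 1) ^ 2 / (RatFunc.X + 1) ^ 2) γ ∧
        RatFunc.X ^ 2 =
          ratComp δ ((RatFunc.X - 1) ^ 2 / (RatFunc.X + 1) ^ 2) := by
  rintro ⟨γ, δ, -, -, H1, -⟩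
  have hrw : ((RatFunc.X - 1) ^ 2 / (RatFunc.X + 1) ^ 2 : RatFunc ℂ) =
      algebraMap ℂ[X] (RatFunc ℂ) ((Polynomial.X - 1) ^ 2) /
        algebraMap ℂ[X] (RatFunc ℂ) ((Polynomial.X + 1) ^ 2) := by
    push_cast [map_pow, map_sub, map_add, map_one, RatFunc.algebraMap_X]
    ring_nf
  have hcop : IsCoprime ((Polynomial.X - 1 : ℂ[X]) ^ 2) ((Polynomial.X + 1) ^ 2) := by
    have : IsCoprime (Polynomial.X - Polynomial.C (1:ℂ)) (Polynomial.X - Polynomial.C (-1:ℂ)) :=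
      Polynomial.isCoprime_X_sub_C_of_isUnit_sub (by norm_num)
    simpa using this.pow
  have hq0 : ((Polynomial.X + 1 : ℂ[X]) ^ 2) ≠ 0 := by
    apply pow_ne_zero
    intro h0
    have := congrArg (Polynomial.eval 0) h0
    simp at this
  have H1' : 4 * RatFunc.X / (RatFunc.X + 1) ^ 2 = (γ - 1) ^ 2 / (γ + 1) ^ 2 := by
    rw [H1, ratComp, hrw, eval_div_coprime _ _ hq0 hcop]
    simp [Polynomial.eval₂_pow]
  have hX1 : (RatFunc.X + 1 : RatFunc ℂ) ≠ 0 := by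
    rw [← RatFunc.algebraMap_X, ← map_one (algebraMap ℂ[X] (RatFunc ℂ)), ← map_add]
    apply RatFunc.algebraMap_ne_zero
    intro h0
    have := congrArg (Polynomial.eval 0) h0
    simp at this
  have hfour : (4 : RatFunc ℂ) ≠ 0 := by
    rw [← map_ofNat RatFunc.C 4]
    exact RC_ne_zero (by norm_num)
  have hLHS : (4 * RatFunc.X / (RatFunc.X + 1) ^ 2 : RatFunc ℂ) ≠ 0 := by
    apply div_ne_zero
    · exact mul_ne_zero hfour RatFunc.X_ne_zero
    · exact pow_ne_zero _ hX1
  have hg1 : (γ + 1 : RatFunc ℂ) ≠ 0 := by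
    intro h0
    apply hLHS
    rw [H1', h0]
    simp
  have hcross : 4 * RatFunc.X * (γ + 1) ^ 2 = (RatFunc.X + 1) ^ 2 * (γ - 1) ^ 2 := by
    rw [div_eq_div_iff (pow_ne_zero _ hX1) (pow_ne_zero _ hg1)] at H1'
    linear_combination H1'
  have hwsq : ((RatFunc.X - 1) ^ 2 * γ - (RatFunc.X ^ 2 + 6 * RatFunc.X + 1)) ^ 2
      = 16 * RatFunc.X * (RatFunc.X + 1) ^ 2 := by
    linear_combination (-(RatFunc.X - 1) ^ 2) * hcross
  have hfin : ((((RatFunc.X - 1) ^ 2 * γ - (RatFunc.X ^ 2 + 6 * RatFunc.X + 1)) /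
      (4 * (RatFunc.X + 1))) ^ 2 : RatFunc ℂ) = RatFunc.X := by
    rw [div_pow, hwsq]
    rw [div_eq_iff (pow_ne_zero _ (mul_ne_zero hfour hX1))]
    ring
  exact no_sqrt_X _ hfin
end

section
/- The identity z³ ∘ ((z²−4)/(z−1)) ∘ ((z²+2)/(z+1)) = (z(z−8)³/(z+1)³) ∘ z³ holds as an equality of rational functions. -/
open Polynomial

/-- Key computation lemma: composing `P/Q` with `g` evaluates numerator and
denominator, provided the denominator does not evaluate to zero. -/
lemma ratComp_div_aux (P Q : ℂ[X]) (g : RatFunc ℂ)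
    (hQ : Polynomial.eval₂ RatFunc.C g Q ≠ 0) :
    RatFunc.eval RatFunc.C g
        (algebraMap ℂ[X] (RatFunc ℂ) P / algebraMap ℂ[X] (RatFunc ℂ) Q)
      = Polynomial.eval₂ RatFunc.C g P / Polynomial.eval₂ RatFunc.C g Q := by
  have hQ0 : Q ≠ 0 := by rintro rfl; simp at hQ
  set F := algebraMap ℂ[X] (RatFunc ℂ) P / algebraMap ℂ[X] (RatFunc ℂ) Q with hF
  have hden : algebraMap ℂ[X] (RatFunc ℂ) F.denom ≠ 0 :=
    RatFunc.algebraMap_ne_zero (RatFunc.denom_ne_zero F)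
  have hcross : F.num * Q = P * F.denom := by
    apply RatFunc.algebraMap_injective
    rw [map_mul, map_mul]
    have h1 : algebraMap ℂ[X] (RatFunc ℂ) F.num
        = F * algebraMap ℂ[X] (RatFunc ℂ) F.denom := by
      have := RatFunc.num_div_denom F
      rw [div_eq_iff hden] at this
      exact this
    have h2 : F * algebraMap ℂ[X] (RatFunc ℂ) Q = algebraMap ℂ[X] (RatFunc ℂ) P := by
      rw [hF, div_mul_cancel₀]
      exact RatFunc.algebraMap_ne_zero hQ0
    rw [h1, mul_right_comm, h2]
  have hcrossE : Polynomial.eval₂ RatFunc.C g F.num * Polynomial.eval₂ RatFunc.C g Q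
      = Polynomial.eval₂ RatFunc.C g P * Polynomial.eval₂ RatFunc.C g F.denom := by
    rw [← Polynomial.eval₂_mul, ← Polynomial.eval₂_mul, hcross]
  have hdenE : Polynomial.eval₂ RatFunc.C g F.denom ≠ 0 := by
    intro h0
    have hnumE : Polynomial.eval₂ RatFunc.C g F.num = 0 := by
      have := hcrossE
      rw [h0, mul_zero] at this
      exact (mul_eq_zero.mp this).resolve_right hQ
    have hcop : IsCoprime (Polynomial.eval₂ RatFunc.C g F.num)
        (Polynomial.eval₂ RatFunc.C g F.denom) := by
      have := (RatFunc.isCoprime_num_denom F).map (Polynomial.eval₂RingHom RatFunc.C g)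
      simpa using this
    rw [hnumE, h0] at hcop
    exact not_isCoprime_zero_zero hcop
  rw [RatFunc.eval, div_eq_div_iff hdenE hQ, hcrossE]

lemma poly_ne_zero_of_eval {p : ℂ[X]} {c : ℂ} (h : p.eval c ≠ 0) : p ≠ 0 := by
  rintro rfl; simp at h

/-- Zieve's identity: `z³ ∘ ((z²-4)/(z-1)) ∘ ((z²+2)/(z+1)) = (z(z-8)³/(z+1)³) ∘ z³`
as an equality of rational functions over `ℂ`. -/
theorem zieve_ritt_counterexample :
    ratComp (RatFunc.X ^ 3)
        (ratComp ((RatFunc.X ^ 2 - 4) / (RatFunc.X - 1))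
          ((RatFunc.X ^ 2 + 2) / (RatFunc.X + 1))) =
      ratComp (RatFunc.X * (RatFunc.X - 8) ^ 3 / (RatFunc.X + 1) ^ 3)
        (RatFunc.X ^ 3) := by
  have p1 : (X + 1 : ℂ[X]) ≠ 0 := poly_ne_zero_of_eval (c := 0) (by simp)
  have p2 : (X ^ 2 - X + 1 : ℂ[X]) ≠ 0 := poly_ne_zero_of_eval (c := 0) (by simp)
  have p3 : (X ^ 3 + 1 : ℂ[X]) ≠ 0 := poly_ne_zero_of_eval (c := 0) (by simp)
  set x : RatFunc ℂ := RatFunc.X with hxdef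
  have hx1 : x + 1 ≠ 0 := by
    have h : x + 1 = algebraMap ℂ[X] (RatFunc ℂ) (X + 1) := by simp [hxdef, map_ofNat]
    rw [h]; exact RatFunc.algebraMap_ne_zero p1
  have hq2 : x ^ 2 - x + 1 ≠ 0 := by
    have h : x ^ 2 - x + 1 = algebraMap ℂ[X] (RatFunc ℂ) (X ^ 2 - X + 1) := by
      simp [hxdef, map_ofNat]
    rw [h]; exact RatFunc.algebraMap_ne_zero p2
  have hx3 : x ^ 3 + 1 ≠ 0 := by
    have h : x ^ 3 + 1 = algebraMap ℂ[X] (RatFunc ℂ) (X ^ 3 + 1) := by simp [hxdef, map_ofNat]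
    rw [h]; exact RatFunc.algebraMap_ne_zero p3
  set g : RatFunc ℂ := (x ^ 2 + 2) / (x + 1) with hg
  have hg1 : g - 1 ≠ 0 := by
    rw [hg, div_sub_one hx1]
    refine div_ne_zero ?_ hx1
    have h : x ^ 2 + 2 - (x + 1) = x ^ 2 - x + 1 := by ring
    rw [h]; exact hq2
  have s1 : ratComp ((x ^ 2 - 4) / (x - 1)) g = (g ^ 2 - 4) / (g - 1) := by
    have h1 : ((x ^ 2 - 4) / (x - 1) : RatFunc ℂ)
        = algebraMap ℂ[X] (RatFunc ℂ) (X ^ 2 - 4) / algebraMap ℂ[X] (RatFunc ℂ) (X - 1) := by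
      simp [hxdef, map_ofNat]
    rw [ratComp, h1, ratComp_div_aux]
    · simp [map_ofNat, Polynomial.eval₂_pow]
    · simpa using hg1
  have s2 : ratComp (x ^ 3) ((g ^ 2 - 4) / (g - 1)) = ((g ^ 2 - 4) / (g - 1)) ^ 3 := by
    have h1 : (x ^ 3 : RatFunc ℂ)
        = algebraMap ℂ[X] (RatFunc ℂ) (X ^ 3) / algebraMap ℂ[X] (RatFunc ℂ) 1 := by
      simp [hxdef, map_ofNat]
    rw [ratComp, h1, ratComp_div_aux] <;> simp
  have s3 : ratComp (x * (x - 8) ^ 3 / (x + 1) ^ 3) (x ^ 3)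
      = x ^ 3 * (x ^ 3 - 8) ^ 3 / (x ^ 3 + 1) ^ 3 := by
    have h1 : (x * (x - 8) ^ 3 / (x + 1) ^ 3 : RatFunc ℂ)
        = algebraMap ℂ[X] (RatFunc ℂ) (X * (X - 8) ^ 3)
            / algebraMap ℂ[X] (RatFunc ℂ) ((X + 1) ^ 3) := by
      simp [hxdef, map_ofNat]
    rw [ratComp, h1, ratComp_div_aux]
    · simp [map_ofNat, Polynomial.eval₂_pow]
    · have : Polynomial.eval₂ RatFunc.C (x ^ 3) ((X + 1) ^ 3) = (x ^ 3 + 1) ^ 3 := by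
        simp [map_ofNat, Polynomial.eval₂_pow]
      rw [this]; exact pow_ne_zero 3 hx3
  rw [s1, s2, s3, hg]
  have hq2' : x ^ 2 + 2 - (x + 1) ≠ 0 := by
    have h : x ^ 2 + 2 - (x + 1) = x ^ 2 - x + 1 := by ring
    rw [h]; exact hq2
  field_simp
  ring
end

section
/- Let R = R₁ ∘ R₂ and R̃ = R₂ ∘ R₁ be rational maps of degree at least 2. Then R₂ maps the Fatou set F(R) into the Fatou set F(R̃), and R₂⁻¹(F(R̃)) ⊆ F(R); equivalently R₂(J(R)) = J(R̃) and R₂⁻¹(J(R̃)) = J(R). -/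
open Filter Topology

/-- The Fatou set of a self-map `f`: points having a neighborhood on which the
family of iterates of `f` is equicontinuous. -/
def FatouSet {X : Type*} [UniformSpace X] (f : X → X) : Set X :=
  {x | ∃ U ∈ 𝓝 x, EquicontinuousOn (fun n : ℕ => f^[n]) U}

/-- The Julia set: the complement of the Fatou set. -/
def JuliaSet {X : Type*} [UniformSpace X] (f : X → X) : Set X :=
  (FatouSet f)ᶜ

/-- Pullback lemma: if `R^[n+1] = A ∘ Rt^[n] ∘ B` with `A, B` continuous on a compact
metric space, then `B ⁻¹' F(Rt) ⊆ F(R)`. -/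
lemma fatou_pullback {X : Type*} [MetricSpace X] [CompactSpace X]
    (R Rt A B : X → X) (hA : Continuous A) (hB : Continuous B)
    (hcomp : ∀ n x, R^[n + 1] x = A (Rt^[n] (B x))) :
    B ⁻¹' FatouSet Rt ⊆ FatouSet R := by
  intro x hx
  obtain ⟨V, hV, hVeq⟩ := hx
  refine ⟨B ⁻¹' V, hB.continuousAt.preimage_mem_nhds hV, ?_⟩
  intro x' hx' E hE
  obtain ⟨ε, hε, hεE⟩ := Metric.mem_uniformity_dist.mp hE
  -- A is uniformly continuous
  obtain ⟨δ₁, hδ₁, hδ₁A⟩ := Metric.uniformContinuous_iff.mp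
    (CompactSpace.uniformContinuous_of_continuous hA) ε hε
  -- equicontinuity of Rt iterates within V at B x'
  have h1 : EquicontinuousWithinAt (fun n : ℕ => Rt^[n]) V (B x') := hVeq (B x') hx'
  have h2 := h1 {p : X × X | dist p.1 p.2 < δ₁} (Metric.dist_mem_uniformity hδ₁)
  -- pull back through B, and intersect with a small ball to handle n = 0
  have h3 : ∀ᶠ z in 𝓝[B ⁻¹' V] x', ∀ n : ℕ, dist (Rt^[n] (B x')) (Rt^[n] (B z)) < δ₁ := by
    have hBt : Tendsto B (𝓝[B ⁻¹' V] x') (𝓝[V] (B x')) :=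
      hB.continuousWithinAt.tendsto_nhdsWithin (fun z hz => hz)
    exact hBt.eventually h2
  have h4 : ∀ᶠ z in 𝓝[B ⁻¹' V] x', dist x' z < ε :=
    eventually_nhdsWithin_of_eventually_nhds
      (Metric.eventually_nhds_iff.mpr ⟨ε, hε, fun hz => by simpa [dist_comm] using hz⟩)
  filter_upwards [h3, h4] with z hz hz' n
  apply hεE
  cases n with
  | zero => simpa using hz'
  | succ n =>
    rw [hcomp n x', hcomp n z]
    exact hδ₁A (hz n)

/-- Pushforward lemma: if `Rt^[n] ∘ B = B ∘ R^[n]` with `B` continuous and open on a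
compact metric space, then `B '' F(R) ⊆ F(Rt)`. -/
lemma fatou_pushforward {X : Type*} [MetricSpace X] [CompactSpace X]
    (R Rt B : X → X) (hB : Continuous B) (hBo : IsOpenMap B)
    (hcomp : ∀ n x, Rt^[n] (B x) = B (R^[n] x)) :
    B '' FatouSet R ⊆ FatouSet Rt := by
  rintro _ ⟨x, hx, rfl⟩
  obtain ⟨U, hU, hUeq⟩ := hx
  -- shrink U to its interior
  have hUeq' : EquicontinuousOn (fun n : ℕ => R^[n]) (interior U) :=
    hUeq.mono interior_subset
  refine ⟨B '' interior U, hBo.image_mem_nhds (interior_mem_nhds.mpr hU), ?_⟩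
  rintro _ ⟨z₀, hz₀, rfl⟩ E hE
  obtain ⟨ε, hε, hεE⟩ := Metric.mem_uniformity_dist.mp hE
  obtain ⟨δ₂, hδ₂, hδ₂B⟩ := Metric.uniformContinuous_iff.mp
    (CompactSpace.uniformContinuous_of_continuous hB) ε hε
  have h1 : EquicontinuousWithinAt (fun n : ℕ => R^[n]) (interior U) z₀ := hUeq' z₀ hz₀
  have h2 := h1 {p : X × X | dist p.1 p.2 < δ₂} (Metric.dist_mem_uniformity hδ₂)
  -- h2 is an eventual statement in 𝓝[interior U] z₀ = 𝓝 z₀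
  rw [nhdsWithin_eq_nhds.mpr (mem_interior_iff_mem_nhds.mp (by simpa using hz₀))] at h2
  -- get an open set N ∋ z₀ witnessing it
  obtain ⟨N, hNsub, hNopen, hNz₀⟩ := eventually_nhds_iff.mp h2
  refine eventually_nhdsWithin_of_eventually_nhds ?_
  have hBN : B '' N ∈ 𝓝 (B z₀) := hBo.image_mem_nhds (hNopen.mem_nhds hNz₀)
  filter_upwards [hBN] with y hy n
  obtain ⟨z, hz, rfl⟩ := hy
  apply hεE
  rw [hcomp n z₀, hcomp n z]
  exact hδ₂B (hNsub z hz n)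

/-- Let `R = R₁ ∘ R₂` and `R̃ = R₂ ∘ R₁` (continuous, open, surjective self-maps of
a compact metric space, as rational maps of degree ≥ 2 are on the sphere). Then
`R₂` maps `F(R)` into `F(R̃)`, `R₂⁻¹(F(R̃)) ⊆ F(R)`; equivalently
`R₂(J(R)) = J(R̃)` and `R₂⁻¹(J(R̃)) = J(R)`. -/
theorem julia_transfer {X : Type*} [MetricSpace X] [CompactSpace X]
    (R Rtilde R₁ R₂ : X → X)
    (h₁ : Continuous R₁) (h₂ : Continuous R₂)
    (hopen₁ : IsOpenMap R₁) (hopen₂ : IsOpenMap R₂)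
    (hsurj₁ : Function.Surjective R₁) (hsurj₂ : Function.Surjective R₂)
    (hR : R = R₁ ∘ R₂) (hRt : Rtilde = R₂ ∘ R₁) :
    R₂ '' FatouSet R ⊆ FatouSet Rtilde ∧
    R₂ ⁻¹' FatouSet Rtilde ⊆ FatouSet R ∧
    R₂ '' JuliaSet R = JuliaSet Rtilde ∧
    R₂ ⁻¹' JuliaSet Rtilde = JuliaSet R := by
  subst hR hRt
  have hcomm : ∀ n x, (R₂ ∘ R₁)^[n] (R₂ x) = R₂ ((R₁ ∘ R₂)^[n] x) := by
    intro n
    induction n with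
    | zero => simp
    | succ n ih =>
      intro x
      rw [Function.iterate_succ_apply, Function.iterate_succ_apply]
      simpa using ih (R₁ (R₂ x))
  have hcomp : ∀ n x, (R₁ ∘ R₂)^[n + 1] x = R₁ ((R₂ ∘ R₁)^[n] (R₂ x)) := by
    intro n
    induction n with
    | zero => simp
    | succ n ih =>
      intro x
      rw [Function.iterate_succ_apply, Function.iterate_succ_apply]
      simpa using ih (R₁ (R₂ x))
  have push := fatou_pushforward (R₁ ∘ R₂) (R₂ ∘ R₁) R₂ h₂ hopen₂ hcomm
  have pull := fatou_pullback (R₁ ∘ R₂) (R₂ ∘ R₁) R₁ R₂ h₁ h₂ hcomp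
  have hpre : R₂ ⁻¹' FatouSet (R₂ ∘ R₁) = FatouSet (R₁ ∘ R₂) := by
    apply Set.Subset.antisymm pull
    intro x hx
    exact push ⟨x, hx, rfl⟩
  refine ⟨push, pull, ?_, ?_⟩
  · have : R₂ ⁻¹' JuliaSet (R₂ ∘ R₁) = JuliaSet (R₁ ∘ R₂) := by
      simp only [JuliaSet, Set.preimage_compl, hpre]
    rw [JuliaSet, ← hpre, ← Set.preimage_compl, Set.image_preimage_eq _ hsurj₂]; rfl
  · simp only [JuliaSet, Set.preimage_compl, hpre]
end

section
/- Let R be a rational map of degree ≥ 2 with no critical relations on its Julia set in the following sense: every critical point of R in J(R) has local degree exactly 2 and no two distinct critical points of R in J(R) share the same image under R. If R = R₁ ∘ R₂ with deg R₁, deg R₂ ≥ 2, then R₂⁻¹(Cr(R₁)) ∩ J(R) = ∅. -/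
open Filter Topology

/-- `f` has local degree `d` at `z₀`. -/
def HasLocalDegAt (f : ℂ → ℂ) (z₀ : ℂ) (d : ℕ) : Prop :=
  ∃ g : ℂ → ℂ, AnalyticAt ℂ g z₀ ∧ g z₀ ≠ 0 ∧
    ∀ᶠ w in 𝓝 z₀, f w - f z₀ = (w - z₀) ^ d * g w

/-- The critical set of `f`: points of local degree at least 2. -/
def Cr (f : ℂ → ℂ) : Set ℂ := {z | ∃ d, 2 ≤ d ∧ HasLocalDegAt f z d}

lemma HasLocalDegAt.one_le {f : ℂ → ℂ} {z : ℂ} {d : ℕ}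
    (h : HasLocalDegAt f z d) : 1 ≤ d := by
  obtain ⟨g, hg, hg0, hev⟩ := h
  rcases Nat.eq_zero_or_pos d with h0 | h1
  · exfalso
    have := hev.self_of_nhds
    simp [h0, sub_self] at this
    exact hg0 this.symm
  · exact h1

lemma HasLocalDegAt.not_lt {f : ℂ → ℂ} {z : ℂ} {d d' : ℕ}
    (h : HasLocalDegAt f z d) (h' : HasLocalDegAt f z d') (hlt : d < d') : False := by
  obtain ⟨g, hg, hg0, hev⟩ := h
  obtain ⟨g', hg', hg0', hev'⟩ := h'
  have key : ∀ᶠ w in 𝓝[≠] z, g w = (w - z) ^ (d' - d) * g' w := by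
    filter_upwards [nhdsWithin_le_nhds hev, nhdsWithin_le_nhds hev',
      self_mem_nhdsWithin] with w h1 h2 hw
    have hwz : w - z ≠ 0 := sub_ne_zero.mpr hw
    have hmul : (w - z) ^ d * g w = (w - z) ^ d * ((w - z) ^ (d' - d) * g' w) := by
      rw [← mul_assoc, ← pow_add, Nat.add_sub_cancel' hlt.le, ← h1, ← h2]
    exact mul_left_cancel₀ (pow_ne_zero _ hwz) hmul
  have t1 : Tendsto g (𝓝[≠] z) (𝓝 (g z)) :=
    hg.continuousAt.tendsto.mono_left nhdsWithin_le_nhds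
  have t2 : Tendsto (fun w => (w - z) ^ (d' - d) * g' w) (𝓝[≠] z) (𝓝 0) := by
    have hc : ContinuousAt (fun w => (w - z) ^ (d' - d) * g' w) z :=
      ((continuousAt_id.sub continuousAt_const).pow _).mul hg'.continuousAt
    have h0 : (z - z) ^ (d' - d) * g' z = 0 := by
      simp [sub_self, zero_pow (Nat.sub_ne_zero_of_lt hlt)]
    have := hc.tendsto.mono_left (nhdsWithin_le_nhds : 𝓝[≠] z ≤ 𝓝 z)
    rwa [h0] at this
  have : g z = 0 := tendsto_nhds_unique (t1.congr' key) t2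
  exact hg0 this

lemma HasLocalDegAt.unique {f : ℂ → ℂ} {z : ℂ} {d d' : ℕ}
    (h : HasLocalDegAt f z d) (h' : HasLocalDegAt f z d') : d = d' := by
  rcases lt_trichotomy d d' with hlt | heq | hlt
  · exact absurd (h.not_lt h' hlt) not_false
  · exact heq
  · exact absurd (h'.not_lt h hlt) not_false

lemma HasLocalDegAt.comp {f g : ℂ → ℂ} {z : ℂ} {m n : ℕ}
    (hf : HasLocalDegAt f (g z) m) (hg : HasLocalDegAt g z n) :
    HasLocalDegAt (f ∘ g) z (n * m) := by
  obtain ⟨G₁, hG₁, hG₁0, hev₁⟩ := hf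
  obtain ⟨G₂, hG₂, hG₂0, hev₂⟩ := hg
  -- g is analytic at z since it agrees with an analytic function near z
  have hga : AnalyticAt ℂ g z := by
    have han : AnalyticAt ℂ (fun w => g z + (w - z) ^ n * G₂ w) z := by
      apply analyticAt_const.add
      exact (((analyticAt_id).sub analyticAt_const).pow _).mul hG₂
    apply han.congr
    filter_upwards [hev₂] with w hw
    rw [← hw]; ring
  refine ⟨fun w => G₂ w ^ m * G₁ (g w), ?_, ?_, ?_⟩
  · exact (hG₂.pow _).mul (hG₁.comp hga)
  · simp only [ne_eq, mul_eq_zero, pow_eq_zero_iff', not_or]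
    exact ⟨fun h => hG₂0 h.1, hG₁0⟩
  · have hpull : ∀ᶠ w in 𝓝 z, f (g w) - f (g z) = (g w - g z) ^ m * G₁ (g w) :=
      hga.continuousAt.tendsto.eventually hev₁
    filter_upwards [hpull, hev₂] with w h1 h2
    simp only [Function.comp_apply]
    rw [h1, h2, mul_pow, ← pow_mul, mul_assoc]

/-- Let `R = R₁ ∘ R₂` with `deg R ≥ 2`, `deg R₁ ≥ 2`, `deg R₂ ≥ 2` (degrees encoded
by local-degree functions with constant fiber sums).  Let `J` be the Julia set of
`R`, completely invariant (`R⁻¹(J) = J`), and suppose `R` has no critical relations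
on `J`: every critical point of `R` in `J` has local degree exactly `2`, and no two
distinct critical points of `R` in `J` share the same image under `R`.  Then
`R₂⁻¹(Cr(R₁)) ∩ J = ∅`. -/
theorem no_composed_critical_points_on_julia
    (R R₁ R₂ : ℂ → ℂ) (hcomp : R = R₁ ∘ R₂)
    (dR d₁ d₂ : ℂ → ℕ)
    (hdR : ∀ z, HasLocalDegAt R z (dR z))
    (hd₁ : ∀ z, HasLocalDegAt R₁ z (d₁ z))
    (hd₂ : ∀ z, HasLocalDegAt R₂ z (d₂ z))
    (e e₁ e₂ : ℕ) (he : 2 ≤ e) (he₁ : 2 ≤ e₁) (he₂ : 2 ≤ e₂)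
    (hfib : ∀ y : ℂ, ∃ s : Finset ℂ, ↑s = R ⁻¹' {y} ∧ ∑ z ∈ s, dR z = e)
    (hfib₁ : ∀ y : ℂ, ∃ s : Finset ℂ, ↑s = R₁ ⁻¹' {y} ∧ ∑ z ∈ s, d₁ z = e₁)
    (hfib₂ : ∀ y : ℂ, ∃ s : Finset ℂ, ↑s = R₂ ⁻¹' {y} ∧ ∑ z ∈ s, d₂ z = e₂)
    (J : Set ℂ) (hJ : R ⁻¹' J = J)
    (hsimple : ∀ z ∈ J, 2 ≤ dR z → dR z = 2)
    (hinj : ∀ z ∈ J, ∀ w ∈ J, 2 ≤ dR z → 2 ≤ dR w → R z = R w → z = w) :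
    R₂ ⁻¹' (Cr R₁) ∩ J = ∅ := by
  ext x
  simp only [Set.mem_inter_iff, Set.mem_preimage, Set.mem_empty_iff_false, iff_false, not_and]
  rintro ⟨d, hd2, hdloc⟩ hxJ
  have hd1x : d₁ (R₂ x) = d := (hd₁ (R₂ x)).unique hdloc
  have hchain : ∀ z, dR z = d₂ z * d₁ (R₂ z) := fun z =>
    (hdR z).unique (by rw [hcomp]; exact (hd₁ (R₂ z)).comp (hd₂ z))
  have hdeg : ∀ z, R₂ z = R₂ x → 2 ≤ dR z := by
    intro z hz
    rw [hchain z, hz, hd1x]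
    calc 2 ≤ d := hd2
    _ = 1 * d := (one_mul d).symm
    _ ≤ d₂ z * d := Nat.mul_le_mul_right d (hd₂ z).one_le
  obtain ⟨s, hs, hsum⟩ := hfib₂ (R₂ x)
  have hxs : x ∈ s := by
    rw [← Finset.mem_coe, hs]; exact rfl
  have hall : ∀ z ∈ s, z = x := by
    intro z hz
    have hR2z : R₂ z = R₂ x := by
      rw [← Finset.mem_coe, hs] at hz; exact hz
    have hRz : R z = R x := by rw [hcomp]; simp [Function.comp, hR2z]
    have hzJ : z ∈ J := by
      rw [← hJ]
      show R z ∈ J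
      rw [hRz, ← Set.mem_preimage, hJ]
      exact hxJ
    exact hinj z hzJ x hxJ (hdeg z hR2z) (hdeg x rfl) hRz
  have hseq : s = {x} := by
    apply Finset.eq_singleton_iff_unique_mem.mpr
    exact ⟨hxs, hall⟩
  have hd2x : d₂ x = e₂ := by
    rw [← hsum, hseq, Finset.sum_singleton]
  have h4 : 4 ≤ dR x := by
    rw [hchain x, hd1x, hd2x]
    calc 4 = 2 * 2 := rfl
    _ ≤ e₂ * d := Nat.mul_le_mul he₂ hd2
  have h2 := hsimple x hxJ (by omega)
  omega
end
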